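/- arXiv:1912.06411 — 2 statements merged into one kernel-verified Lean document; each statement's English description precedes it below -/
import Mathlib

section
/- Let Λ, Ψ : [1,∞) → [1,∞) be increasing, differentiable functions with Λ(v) → ∞ and Ψ(v) → ∞ as v → ∞. Then the integral ∫₁^∞ Λ'(v) ln Ψ(v) / Λ(v)² dv converges if and only if the integral ∫₁^∞ Ψ'(v) / (Ψ(v) Λ(v)) dv converges. -/
/-!
With `h = log Ψ / Λ` one has `h' = Ψ' / (Ψ Λ) - Λ' log Ψ / Λ²`, a difference of two nonnegative
functions, so on `[1, A]` the two integrals differ by `h A - h 1`. Since `h ≥ 0`, convergence of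
the second integral bounds the first. Conversely, since `Λ → ∞`,
`h A = log Ψ(A) ∫_A^∞ Λ'/Λ² ≤ ∫_A^∞ Λ' log Ψ / Λ²` because `Ψ` is increasing, so convergence of
the first integral bounds `h`, and hence the second integral.
-/

open MeasureTheory Filter Set Topology

lemma MonotoneOn.deriv_nonneg_of_differentiableAt {f : ℝ → ℝ} {s : Set ℝ} {x : ℝ}
    (hf : MonotoneOn f s) (hs : UniqueDiffWithinAt ℝ s x) (hd : DifferentiableAt ℝ f x) :
    0 ≤ deriv f x :=
  hd.derivWithin hs ▸ hf.derivWithin_nonneg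

lemma MonotoneOn.integrableOn_deriv_mul {φ u : ℝ → ℝ} {a b : ℝ}
    (hφ : MonotoneOn φ (Icc a b)) (hu : ContinuousOn u (Icc a b)) :
    IntegrableOn (fun x => deriv φ x * u x) (Ioc a b) := by
  rcases le_or_gt a b with hab | hba
  · have hφ' : IntervalIntegrable (deriv φ) volume a b :=
      MonotoneOn.intervalIntegrable_deriv (uIcc_of_le hab ▸ hφ)
    exact hφ'.1.mul_continuousOn_of_subset hu measurableSet_Ioc isCompact_Icc Ioc_subset_Icc_self
  · simp [Ioc_eq_empty_of_le hba.le]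

lemma hasDerivAt_log_div {Λ Ψ : ℝ → ℝ} {v : ℝ} (hΛ : DifferentiableAt ℝ Λ v)
    (hΨ : DifferentiableAt ℝ Ψ v) (hΛ0 : Λ v ≠ 0) (hΨ0 : Ψ v ≠ 0) :
    HasDerivAt (fun w => Real.log (Ψ w) / Λ w)
      (deriv Ψ v / (Ψ v * Λ v) - deriv Λ v * Real.log (Ψ v) / Λ v ^ 2) v := by
  refine ((hΨ.hasDerivAt.log hΨ0).div hΛ.hasDerivAt hΛ0).congr_deriv ?_
  field_simp

lemma integrableOn_Ioi_of_hasDerivAt_sub {F f g : ℝ → ℝ} {a C : ℝ}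
    (hF : ∀ x ∈ Ici a, HasDerivAt F (g x - f x) x) (hf : ∀ x ∈ Ioi a, 0 ≤ f x)
    (hf_loc : ∀ b, IntegrableOn f (Ioc a b)) (hg : IntegrableOn g (Ioi a))
    (hFC : ∀ x ∈ Ici a, C ≤ F x) :
    IntegrableOn f (Ioi a) := by
  refine integrableOn_Ioi_of_intervalIntegral_norm_bounded
    ((∫ x in Ioi a, ‖g x‖) + F a - C) a hf_loc tendsto_id ?_
  filter_upwards [eventually_ge_atTop a] with b hab
  have hg_loc : IntegrableOn g (Ioc a b) := hg.mono_set Ioc_subset_Ioi_self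
  have hftc : ∫ x in Ioc a b, (g x - f x) = F b - F a := by
    rw [← intervalIntegral.integral_of_le hab]
    refine intervalIntegral.integral_eq_sub_of_hasDerivAt
      (fun x hx => hF x (uIcc_of_le hab ▸ hx).1) ?_
    exact (intervalIntegrable_iff_integrableOn_Ioc_of_le hab).2 (hg_loc.sub (hf_loc b))
  have hg_le : ∫ x in Ioc a b, g x ≤ ∫ x in Ioi a, ‖g x‖ :=
    calc ∫ x in Ioc a b, g x ≤ ∫ x in Ioc a b, ‖g x‖ :=
          integral_mono hg_loc hg_loc.norm fun x => Real.le_norm_self _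
      _ ≤ ∫ x in Ioi a, ‖g x‖ :=
          setIntegral_mono_set hg.norm (Eventually.of_forall fun _ => norm_nonneg _)
            Ioc_subset_Ioi_self.eventuallyLE
  rw [intervalIntegral.integral_of_le hab,
    setIntegral_congr_fun measurableSet_Ioc fun x hx => Real.norm_of_nonneg (hf x hx.1)]
  rw [integral_sub hg_loc (hf_loc b)] at hftc
  linarith [hFC b hab]

lemma div_le_integral_Ioi_deriv_mul_div_sq {Λ w : ℝ → ℝ} {a : ℝ}
    (hΛd : ∀ x ∈ Ici a, DifferentiableAt ℝ Λ x) (hΛpos : ∀ x ∈ Ici a, 0 < Λ x)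
    (hΛ' : ∀ x ∈ Ioi a, 0 ≤ deriv Λ x) (hΛtop : Tendsto Λ atTop atTop)
    (hw : MonotoneOn w (Ici a))
    (hint : IntegrableOn (fun x => deriv Λ x * w x / Λ x ^ 2) (Ioi a)) :
    w a / Λ a ≤ ∫ x in Ioi a, deriv Λ x * w x / Λ x ^ 2 := by
  have hd : ∀ x ∈ Ici a, HasDerivAt (fun x => -(Λ x)⁻¹) (deriv Λ x / Λ x ^ 2) x := by
    intro x hx
    refine ((hΛd x hx).hasDerivAt.inv (hΛpos x hx).ne').neg.congr_deriv ?_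
    ring
  have hlim : Tendsto (fun x => -(Λ x)⁻¹) atTop (𝓝 0) := by
    simpa using hΛtop.inv_tendsto_atTop.neg
  have hd_nonneg : ∀ x ∈ Ioi a, 0 ≤ deriv Λ x / Λ x ^ 2 :=
    fun x hx => div_nonneg (hΛ' x hx) (sq_nonneg _)
  calc w a / Λ a = ∫ x in Ioi a, w a * (deriv Λ x / Λ x ^ 2) := by
        rw [integral_const_mul, integral_Ioi_of_hasDerivAt_of_nonneg' hd hd_nonneg hlim]
        ring
    _ ≤ ∫ x in Ioi a, deriv Λ x * w x / Λ x ^ 2 := by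
        refine setIntegral_mono_on
          ((integrableOn_Ioi_deriv_of_nonneg' hd hd_nonneg hlim).const_mul _) hint
          measurableSet_Ioi fun x hx => ?_
        rw [mul_comm (deriv Λ x), mul_div_assoc]
        exact mul_le_mul_of_nonneg_right (hw self_mem_Ici hx.out.le hx.out.le) (hd_nonneg x hx)

lemma div_le_integral_Ioi_deriv_mul_div_sq_of_le {Λ w : ℝ → ℝ} {a v : ℝ}
    (hΛd : ∀ x ∈ Ici a, DifferentiableAt ℝ Λ x) (hΛpos : ∀ x ∈ Ici a, 0 < Λ x)
    (hΛ' : ∀ x ∈ Ioi a, 0 ≤ deriv Λ x) (hΛtop : Tendsto Λ atTop atTop)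
    (hw : MonotoneOn w (Ici a)) (hw0 : ∀ x ∈ Ioi a, 0 ≤ w x)
    (hint : IntegrableOn (fun x => deriv Λ x * w x / Λ x ^ 2) (Ioi a)) (hv : a ≤ v) :
    w v / Λ v ≤ ∫ x in Ioi a, deriv Λ x * w x / Λ x ^ 2 := by
  have hav : Ici v ⊆ Ici a := Ici_subset_Ici.2 hv
  calc w v / Λ v ≤ ∫ x in Ioi v, deriv Λ x * w x / Λ x ^ 2 :=
        div_le_integral_Ioi_deriv_mul_div_sq (fun x hx => hΛd x (hav hx))
          (fun x hx => hΛpos x (hav hx)) (fun x hx => hΛ' x (hv.trans_lt hx))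
          hΛtop (hw.mono hav) (hint.mono_set (Ioi_subset_Ioi hv))
    _ ≤ ∫ x in Ioi a, deriv Λ x * w x / Λ x ^ 2 := by
        refine setIntegral_mono_set hint (ae_restrict_of_forall_mem measurableSet_Ioi
          fun x hx => ?_) (Ioi_subset_Ioi hv).eventuallyLE
        exact div_nonneg (mul_nonneg (hΛ' x hx) (hw0 x hx)) (sq_nonneg _)

theorem BR_condition_equiv_general
    (Λ Ψ : ℝ → ℝ)
    (hΛmono : MonotoneOn Λ (Set.Ici 1)) (hΨmono : MonotoneOn Ψ (Set.Ici 1))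
    (hΛdiff : ∀ v ∈ Set.Ici (1:ℝ), DifferentiableAt ℝ Λ v)
    (hΨdiff : ∀ v ∈ Set.Ici (1:ℝ), DifferentiableAt ℝ Ψ v)
    (hΛ1 : ∀ v : ℝ, 1 ≤ v → 1 ≤ Λ v) (hΨ1 : ∀ v : ℝ, 1 ≤ v → 1 ≤ Ψ v)
    (hΛtop : Tendsto Λ atTop atTop) :
    IntegrableOn (fun v => deriv Λ v * Real.log (Ψ v) / (Λ v) ^ 2) (Set.Ici 1)
      ↔ IntegrableOn (fun v => deriv Ψ v / (Ψ v * Λ v)) (Set.Ici 1) := by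
  set f := fun v => deriv Λ v * Real.log (Ψ v) / (Λ v) ^ 2
  set g := fun v => deriv Ψ v / (Ψ v * Λ v)
  have hΛpos : ∀ v ∈ Ici (1:ℝ), 0 < Λ v := fun v hv => one_pos.trans_le (hΛ1 v hv)
  have hΨpos : ∀ v ∈ Ici (1:ℝ), 0 < Ψ v := fun v hv => one_pos.trans_le (hΨ1 v hv)
  have hlog : ∀ v ∈ Ici (1:ℝ), 0 ≤ Real.log (Ψ v) := fun v hv => Real.log_nonneg (hΨ1 v hv)
  have hlog_mono : MonotoneOn (fun v => Real.log (Ψ v)) (Ici 1) := fun x hx y hy hxy =>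
    Real.log_le_log (hΨpos x hx) (hΨmono hx hy hxy)
  have hΛ' : ∀ v ∈ Ici (1:ℝ), 0 ≤ deriv Λ v := fun v hv =>
    hΛmono.deriv_nonneg_of_differentiableAt (uniqueDiffOn_Ici 1 v hv) (hΛdiff v hv)
  have hf0 : ∀ v ∈ Ioi (1:ℝ), 0 ≤ f v := fun v hv =>
    div_nonneg (mul_nonneg (hΛ' v hv.out.le) (hlog v hv.out.le)) (sq_nonneg _)
  have hg0 : ∀ v ∈ Ioi (1:ℝ), 0 ≤ g v := fun v hv =>
    div_nonneg (hΨmono.deriv_nonneg_of_differentiableAt (uniqueDiffOn_Ici 1 v hv.out.le)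
      (hΨdiff v hv.out.le)) (mul_pos (hΨpos v hv.out.le) (hΛpos v hv.out.le)).le
  have hf_loc : ∀ b, IntegrableOn f (Ioc 1 b) := fun b => by
    have hu : ContinuousOn (fun v => Real.log (Ψ v) / Λ v ^ 2) (Ici 1) := fun v hv =>
      (((hΨdiff v hv).continuousAt.log (hΨpos v hv).ne').div ((hΛdiff v hv).continuousAt.pow 2)
        (pow_pos (hΛpos v hv) 2).ne').continuousWithinAt
    simpa only [f, mul_div_assoc] using
      (hΛmono.mono Icc_subset_Ici_self).integrableOn_deriv_mul (hu.mono Icc_subset_Ici_self)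
  have hg_loc : ∀ b, IntegrableOn g (Ioc 1 b) := fun b => by
    have hu : ContinuousOn (fun v => (Ψ v * Λ v)⁻¹) (Ici 1) := fun v hv =>
      (((hΨdiff v hv).continuousAt.mul (hΛdiff v hv).continuousAt).inv₀
        (mul_pos (hΨpos v hv) (hΛpos v hv)).ne').continuousWithinAt
    simpa only [g, div_eq_mul_inv] using
      (hΨmono.mono Icc_subset_Ici_self).integrableOn_deriv_mul (hu.mono Icc_subset_Ici_self)
  have hderiv : ∀ v ∈ Ici (1:ℝ), HasDerivAt (fun v => Real.log (Ψ v) / Λ v) (g v - f v) v :=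
    fun v hv => hasDerivAt_log_div (hΛdiff v hv) (hΨdiff v hv) (hΛpos v hv).ne' (hΨpos v hv).ne'
  rw [integrableOn_Ici_iff_integrableOn_Ioi, integrableOn_Ici_iff_integrableOn_Ioi]
  constructor
  · intro hf
    refine integrableOn_Ioi_of_hasDerivAt_sub (F := fun v => -(Real.log (Ψ v) / Λ v))
      (C := -∫ v in Ioi 1, f v) (fun v hv => (hderiv v hv).neg.congr_deriv (neg_sub _ _))
      hg0 hg_loc hf fun v hv => neg_le_neg ?_
    exact div_le_integral_Ioi_deriv_mul_div_sq_of_le hΛdiff hΛpos (fun x hx => hΛ' x hx.out.le)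
      hΛtop hlog_mono (fun x hx => hlog x hx.out.le) hf hv
  · intro hg
    exact integrableOn_Ioi_of_hasDerivAt_sub hderiv hf0 hf_loc hg
      fun v hv => div_nonneg (hlog v hv) (hΛpos v hv).le

/-- equivalence of the two forms of the Λ-Brjuno-Rüssmann condition. -/
theorem BR_condition_equiv
    (Λ Ψ : ℝ → ℝ)
    (hΛmono : MonotoneOn Λ (Set.Ici 1)) (hΨmono : MonotoneOn Ψ (Set.Ici 1))
    (hΛdiff : ∀ v ∈ Set.Ici (1:ℝ), DifferentiableAt ℝ Λ v)
    (hΨdiff : ∀ v ∈ Set.Ici (1:ℝ), DifferentiableAt ℝ Ψ v)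
    (hΛ1 : ∀ v : ℝ, 1 ≤ v → 1 ≤ Λ v) (hΨ1 : ∀ v : ℝ, 1 ≤ v → 1 ≤ Ψ v)
    (hΛtop : Tendsto Λ atTop atTop) (hΨtop : Tendsto Ψ atTop atTop) :
    IntegrableOn (fun v => deriv Λ v * Real.log (Ψ v) / (Λ v) ^ 2) (Set.Ici 1)
      ↔ IntegrableOn (fun v => deriv Ψ v / (Ψ v * Λ v)) (Set.Ici 1) :=
  BR_condition_equiv_general Λ Ψ hΛmono hΨmono hΛdiff hΨdiff hΛ1 hΨ1 hΛtop
end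

section
/- Let Λ, Ψ : [1,∞) → [1,∞) be increasing differentiable functions tending to infinity. If ∫₁^∞ Λ'(v) ln Ψ(v)/Λ(v)² dv < ∞ (the Λ-Brjuno-Rüssmann condition), then lim_{v→∞} ln Ψ(v) / Λ(v) = 0 (the Λ-Rüssmann condition). -/
open MeasureTheory Filter

/-- Auxiliary: the derivative of a function monotone on `[1,∞)` is nonnegative there. -/
lemma aux_deriv_nonneg_of_monotoneOn (Λ : ℝ → ℝ) (h : MonotoneOn Λ (Set.Ici 1)) {v : ℝ}
    (hv : 1 ≤ v) (hd : DifferentiableAt ℝ Λ v) : 0 ≤ deriv Λ v := by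
  have H := hd.hasDerivAt
  rw [hasDerivAt_iff_tendsto_slope] at H
  have H' : Tendsto (slope Λ v) (nhdsWithin v (Set.Ioi v)) (nhds (deriv Λ v)) :=
    H.mono_left (nhdsWithin_mono _ (fun w hw => ne_of_gt hw))
  refine ge_of_tendsto H' ?_
  filter_upwards [self_mem_nhdsWithin] with w hw
  have hw' : v < w := hw
  have : Λ v ≤ Λ w := h hv (le_trans hv hw'.le) hw'.le
  rw [slope_def_field]
  exact div_nonneg (by linarith) (by linarith)

/-- the Λ-Brjuno-Rüssmann condition implies the Λ-Rüssmann condition. -/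
theorem BR_implies_Russmann
    (Λ Ψ : ℝ → ℝ)
    (hΛmono : MonotoneOn Λ (Set.Ici 1)) (hΨmono : MonotoneOn Ψ (Set.Ici 1))
    (hΛdiff : ∀ v ∈ Set.Ici (1:ℝ), DifferentiableAt ℝ Λ v)
    (hΨdiff : ∀ v ∈ Set.Ici (1:ℝ), DifferentiableAt ℝ Ψ v)
    (hΛ1 : ∀ v : ℝ, 1 ≤ v → 1 ≤ Λ v) (hΨ1 : ∀ v : ℝ, 1 ≤ v → 1 ≤ Ψ v)
    (hΛtop : Tendsto Λ atTop atTop) (hΨtop : Tendsto Ψ atTop atTop)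
    (hBR : IntegrableOn (fun v => deriv Λ v * Real.log (Ψ v) / (Λ v) ^ 2)
      (Set.Ici 1)) :
    Tendsto (fun v => Real.log (Ψ v) / Λ v) atTop (nhds 0) := by
  set f : ℝ → ℝ := fun v => deriv Λ v * Real.log (Ψ v) / (Λ v) ^ 2 with hfdef
  have hΛpos : ∀ v : ℝ, 1 ≤ v → 0 < Λ v := fun v hv => lt_of_lt_of_le one_pos (hΛ1 v hv)
  have hfnn : ∀ v : ℝ, 1 ≤ v → 0 ≤ f v := fun v hv =>
    div_nonneg (mul_nonneg (aux_deriv_nonneg_of_monotoneOn Λ hΛmono hv (hΛdiff v hv))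
      (Real.log_nonneg (hΨ1 v hv))) (sq_nonneg _)
  -- the tail integral
  set T : ℝ → ℝ := fun x => ∫ v in Set.Ioi x, f v with hTdef
  -- Step 1: key inequality
  have key : ∀ x : ℝ, 1 ≤ x → Real.log (Ψ x) / Λ x ≤ T x := by
    intro x hx
    have hTnn0 : ∀ y : ℝ, x ≤ y → ∫ v in Set.Ioc x y, f v ≤ T x := by
      intro y hy
      refine setIntegral_mono_set (hBR.mono_set ?_) ?_ ?_
      · exact fun v hv => le_of_lt (lt_of_le_of_lt hx hv)
      · filter_upwards [ae_restrict_mem measurableSet_Ioi] with v hv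
        exact hfnn v (le_of_lt (lt_of_le_of_lt hx hv))
      · exact Filter.Eventually.of_forall (fun v hv => hv.1)
    set L := Real.log (Ψ x) with hLdef
    have hL0 : 0 ≤ L := Real.log_nonneg (hΨ1 x hx)
    rcases eq_or_lt_of_le hL0 with hL | hL
    · rw [div_eq_mul_inv, ← hL, zero_mul]
      refine setIntegral_nonneg measurableSet_Ioi (fun v hv => ?_)
      exact hfnn v (le_of_lt (lt_of_le_of_lt hx hv))
    -- L > 0 case
    set h : ℝ → ℝ := fun v => deriv Λ v / (Λ v) ^ 2 with hhdef
    have hderiv : ∀ v : ℝ, 1 ≤ v → HasDerivAt (fun t => -(Λ t)⁻¹) (h v) v := by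
      intro v hv
      have := ((hΛdiff v hv).hasDerivAt.inv (ne_of_gt (hΛpos v hv))).neg
      exact this.congr_deriv (by simp [hhdef, neg_div])
    have hkey : ∀ y : ℝ, x ≤ y → L * (Λ x)⁻¹ ≤ T x + L * (Λ y)⁻¹ := by
      intro y hy
      -- integrability of h on [x,y]
      have hIcc : Set.Icc x y ⊆ Set.Ici 1 := fun v hv => le_trans hx hv.1
      have hΛcont : ContinuousOn Λ (Set.Icc x y) := fun v hv =>
        (hΛdiff v (hIcc hv)).continuousAt.continuousWithinAt
      have hsm : AEStronglyMeasurable h (volume.restrict (Set.Icc x y)) := by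
        refine AEStronglyMeasurable.mul ((measurable_deriv Λ).aestronglyMeasurable) ?_
        exact ((hΛcont.pow 2).inv₀ (fun v hv =>
          pow_ne_zero 2 (ne_of_gt (hΛpos v (hIcc hv))))).aestronglyMeasurable measurableSet_Icc
      have hfint : IntegrableOn f (Set.Icc x y) := hBR.mono_set hIcc
      have hbound : ∀ᵐ v ∂(volume.restrict (Set.Icc x y)), ‖h v‖ ≤ f v / L := by
        filter_upwards [ae_restrict_mem measurableSet_Icc] with v hv
        have hv1 : (1:ℝ) ≤ v := hIcc hv
        have hhv : 0 ≤ h v := div_nonneg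
          (aux_deriv_nonneg_of_monotoneOn Λ hΛmono hv1 (hΛdiff v hv1)) (sq_nonneg _)
        rw [Real.norm_eq_abs, abs_of_nonneg hhv]
        rw [le_div_iff₀ hL]
        have hlog : L ≤ Real.log (Ψ v) :=
          Real.log_le_log (lt_of_lt_of_le one_pos (hΨ1 x hx)) (hΨmono hx hv1 hv.1)
        calc h v * L ≤ h v * Real.log (Ψ v) := by
              exact mul_le_mul_of_nonneg_left hlog hhv
          _ = f v := by rw [hfdef, hhdef]; ring
      have hhint : IntegrableOn h (Set.Icc x y) :=
        Integrable.mono' (hfint.div_const L) hsm hbound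
      have hhii : IntervalIntegrable h volume x y := by
        rw [intervalIntegrable_iff, Set.uIoc_of_le hy]
        exact hhint.mono_set Set.Ioc_subset_Icc_self
      have hfii : IntervalIntegrable f volume x y := by
        rw [intervalIntegrable_iff, Set.uIoc_of_le hy]
        exact hfint.mono_set Set.Ioc_subset_Icc_self
      have hftc : ∫ v in x..y, h v = (Λ x)⁻¹ - (Λ y)⁻¹ := by
        have := intervalIntegral.integral_eq_sub_of_hasDerivAt
          (f := fun t => -(Λ t)⁻¹) (f' := h)
          (fun v hv => hderiv v (le_trans hx (by rw [Set.uIcc_of_le hy] at hv; exact hv.1))) hhii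
        rw [this]; ring
      have hmono : ∫ v in x..y, L * h v ≤ ∫ v in x..y, f v := by
        refine intervalIntegral.integral_mono_on hy (hhii.const_mul L) hfii (fun v hv => ?_)
        have hv1 : (1:ℝ) ≤ v := hIcc hv
        have hhv : 0 ≤ h v := div_nonneg
          (aux_deriv_nonneg_of_monotoneOn Λ hΛmono hv1 (hΛdiff v hv1)) (sq_nonneg _)
        have hlog : L ≤ Real.log (Ψ v) :=
          Real.log_le_log (lt_of_lt_of_le one_pos (hΨ1 x hx)) (hΨmono hx hv1 hv.1)
        calc L * h v ≤ Real.log (Ψ v) * h v := mul_le_mul_of_nonneg_right hlog hhv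
          _ = f v := by rw [hfdef, hhdef]; ring
      have hLmul : ∫ v in x..y, L * h v = L * ((Λ x)⁻¹ - (Λ y)⁻¹) := by
        rw [intervalIntegral.integral_const_mul, hftc]
      have hioc : ∫ v in x..y, f v ≤ T x := by
        rw [intervalIntegral.integral_of_le hy]
        exact hTnn0 y hy
      have := le_trans (hLmul ▸ hmono) hioc
      linarith [this]
    -- take y → ∞
    have htend : Tendsto (fun y => T x + L * (Λ y)⁻¹) atTop (nhds (T x)) := by
      have : Tendsto (fun y => (Λ y)⁻¹) atTop (nhds 0) :=
        tendsto_inv_atTop_zero.comp hΛtop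
      simpa using tendsto_const_nhds.add ((this.const_mul L).congr (fun y => rfl))
    have := ge_of_tendsto htend (eventually_atTop.2 ⟨x, hkey⟩)
    rw [div_eq_mul_inv]
    exact this
  -- Step 2: tail tends to zero
  have htail : Tendsto T atTop (nhds 0) := by
    have hIoi1 : IntegrableOn f (Set.Ioi 1) := hBR.mono_set Set.Ioi_subset_Ici_self
    have h1 : Tendsto (fun x => ∫ v in (1:ℝ)..x, f v) atTop (nhds (∫ v in Set.Ioi 1, f v)) :=
      intervalIntegral_tendsto_integral_Ioi 1 hIoi1 tendsto_id
    have h2 : Tendsto (fun x => (∫ v in Set.Ioi 1, f v) - ∫ v in (1:ℝ)..x, f v) atTop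
        (nhds 0) := by
      simpa using ((tendsto_const_nhds (x := ∫ v in Set.Ioi 1, f v)).sub h1)
    refine h2.congr' ?_
    filter_upwards [eventually_ge_atTop (1:ℝ)] with x hx
    have hsplit : ∫ v in Set.Ioi 1, f v = (∫ v in Set.Ioc 1 x, f v) + ∫ v in Set.Ioi x, f v := by
      rw [← setIntegral_union (Set.Ioc_disjoint_Ioi le_rfl) measurableSet_Ioi
        (hBR.mono_set (fun v hv => le_of_lt hv.1)) (hBR.mono_set (fun v hv => le_trans hx hv.le)),
        Set.Ioc_union_Ioi_eq_Ioi hx]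
    rw [intervalIntegral.integral_of_le hx, hsplit]
    ring
  -- Step 3: squeeze
  refine squeeze_zero' ?_ ?_ htail
  · filter_upwards [eventually_ge_atTop (1:ℝ)] with x hx
    exact div_nonneg (Real.log_nonneg (hΨ1 x hx)) (hΛpos x hx).le
  · filter_upwards [eventually_ge_atTop (1:ℝ)] with x hx
    exact key x hx
end
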